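/- Reversibility criterion for the Boltzmann–Enskog equation: let f ∈ C¹ solve ∂f/∂t = -v1·∇_r f + (na²)∫_{⟨v21,σ⟩≥0} ⟨v21,σ⟩ [f(r1,v1',t) f(r1+aσ,v2',t) - f(r1,v1,t) f(r1-aσ,v2,t)] dσ dv2. Then f̃(r,v,t) := f(r,-v,-t) satisfies the same equation if and only if, after substitution, the collision integral applied to f̃ with pre- and post-collision velocities swapped agrees with the original; in particular, a sufficient condition is that f(r1,v1,t) f(r1-aσ,v2,t) = f(r1,v1',t) f(r1-aσ,v2',t) for all r1, v1, v2, t and unit σ with ⟨v21,σ⟩ ≥ 0. -/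

import Mathlib

open scoped RealInnerProductSpace
open MeasureTheory

abbrev E := EuclideanSpace ℝ (Fin 3)

/-- The Boltzmann--Enskog collision integral of `f` at `(r1, v1, t)`:
`n a² ∫_{⟨v21,σ⟩≥0} ⟨v21,σ⟩ [f(r1,v1',t) f(r1+aσ,v2',t) - f(r1,v1,t) f(r1-aσ,v2,t)] dσ dv2`,
where `v1' = v1 + σ⟨v21,σ⟩`, `v2' = v2 - σ⟨v21,σ⟩` and the `σ`-integral is with
respect to the 2-dimensional Hausdorff (surface) measure on the unit sphere. -/
noncomputable def enskogCollision (a n : ℝ) (f : E × E × ℝ → ℝ) (r1 v1 : E) (t : ℝ) : ℝ :=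
  n * a ^ 2 *
    ∫ v2 : E, ∫ σ in {σ : E | ‖σ‖ = 1 ∧ 0 ≤ ⟪v2 - v1, σ⟫},
      ⟪v2 - v1, σ⟫ *
        (f (r1, v1 + ⟪v2 - v1, σ⟫ • σ, t) * f (r1 + a • σ, v2 - ⟪v2 - v1, σ⟫ • σ, t)
          - f (r1, v1, t) * f (r1 - a • σ, v2, t)) ∂(μH[2])

/-- `f` solves the Boltzmann--Enskog equation
`∂f/∂t = -v1·∇_r f + St f` (derivatives expressed via Fréchet derivatives). -/
def SolvesBE (a n : ℝ) (f : E × E × ℝ → ℝ) : Prop :=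
  ∀ (r1 v1 : E) (t : ℝ),
    fderiv ℝ f (r1, v1, t) (0, 0, 1) =
      -(fderiv ℝ f (r1, v1, t) (v1, 0, 0)) + enskogCollision a n f r1 v1 t

/-! Reversing velocities and time flips the sign of `∂ₜf` and leaves the streaming term
`-v₁·∇ᵣf` unchanged, so the claim reduces to the collision integral of `f̃` at `(r₁, v₁, t)`
being minus that of `f` at `(r₁, -v₁, -t)`. The substitutions `v₂ ↦ -v₂` and `σ ↦ -σ` preserve
the measures and the hemisphere `⟨v₂₁, σ⟩ ≥ 0`, and turn the collision integrand of `f̃` into that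
of `f` with the partner positions `r₁ ± aσ` exchanged. The factorization identity, applied once at
`-σ` and once at `σ` to the post-collision velocities, then exchanges gain and loss. -/

section VelocityTimeFlip

variable {X Y G : Type*} [NormedAddCommGroup X] [NormedSpace ℝ X] [NormedAddCommGroup Y]
  [NormedSpace ℝ Y] [NormedAddCommGroup G] [NormedSpace ℝ G]

def velocityTimeFlip : (X × Y × ℝ) ≃L[ℝ] (X × Y × ℝ) :=
  (ContinuousLinearEquiv.refl ℝ X).prodCongr
    ((ContinuousLinearEquiv.neg ℝ).prodCongr (ContinuousLinearEquiv.neg ℝ))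

theorem fderiv_comp_velocityTimeFlip (f : X × Y × ℝ → G) (p u : X × Y × ℝ) :
    fderiv ℝ (fun q => f (q.1, -q.2.1, -q.2.2)) p u
      = fderiv ℝ f (p.1, -p.2.1, -p.2.2) (u.1, -u.2.1, -u.2.2) :=
  congrArg (· u) (velocityTimeFlip.comp_right_fderiv (f := f) (x := p))

end VelocityTimeFlip

theorem setIntegral_neg_hausdorffMeasure {F G : Type*} [NormedAddCommGroup F] [MeasurableSpace F]
    [BorelSpace F] [NormedAddCommGroup G] [NormedSpace ℝ G] (d : ℝ) (g : F → G) (s : Set F) :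
    ∫ x in -s, g x ∂μH[d] = ∫ x in s, g (-x) ∂μH[d] := by
  rw [← ((IsometryEquiv.neg F).measurePreserving_hausdorffMeasure d).setIntegral_preimage_emb
    (IsometryEquiv.neg F).toHomeomorph.measurableEmbedding g (-s)]
  exact congrArg (fun t => ∫ x in t, g (-x) ∂μH[d]) (neg_neg s)

section Collision

variable {F : Type*} [NormedAddCommGroup F] [InnerProductSpace ℝ F]

def ProductCollisionInvariant (a : ℝ) (h : F → F → ℝ) : Prop :=
  ∀ r1 v1 v2 σ : F, ‖σ‖ = 1 → 0 ≤ ⟪v2 - v1, σ⟫ →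
    h r1 v1 * h (r1 - a • σ) v2
      = h r1 (v1 + ⟪v2 - v1, σ⟫ • σ) * h (r1 - a • σ) (v2 - ⟪v2 - v1, σ⟫ • σ)

theorem inner_neg_sub_neg_neg (u v σ : F) : ⟪-v - -u, -σ⟫ = ⟪v - u, σ⟫ := by
  rw [neg_sub_neg, inner_neg_right, ← inner_neg_left, neg_sub]

theorem measurableSet_collisionHemisphere [MeasurableSpace F] [OpensMeasurableSpace F] (w : F) :
    MeasurableSet {σ : F | ‖σ‖ = 1 ∧ 0 ≤ ⟪w, σ⟫} :=
  (isClosed_eq continuous_norm continuous_const).measurableSet.inter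
    (isClosed_le continuous_const
      (continuous_const.inner continuous_id : Continuous fun σ : F => ⟪w, σ⟫)).measurableSet

theorem neg_collisionHemisphere (u v : F) :
    -{σ : F | ‖σ‖ = 1 ∧ 0 ≤ ⟪v - u, σ⟫} = {σ : F | ‖σ‖ = 1 ∧ 0 ≤ ⟪-v - -u, σ⟫} := by
  ext σ
  rw [Set.mem_neg, Set.mem_ofPred, Set.mem_ofPred, norm_neg, ← inner_neg_sub_neg_neg, neg_neg]

theorem ProductCollisionInvariant.gainLoss_reversal {a : ℝ} {h : F → F → ℝ}
    (hh : ProductCollisionInvariant a h) (r1 v1 v2 : F) {σ : F} (hσ : ‖σ‖ = 1)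
    (hk : 0 ≤ ⟪v2 - v1, σ⟫) :
    h r1 (-(v1 + ⟪v2 - v1, σ⟫ • σ)) * h (r1 + a • σ) (-(v2 - ⟪v2 - v1, σ⟫ • σ))
        - h r1 (-v1) * h (r1 - a • σ) (-v2)
      = -(h r1 (-(v1 + ⟪v2 - v1, σ⟫ • σ)) * h (r1 - a • σ) (-(v2 - ⟪v2 - v1, σ⟫ • σ))
        - h r1 (-v1) * h (r1 + a • σ) (-v2)) := by
  have incoming := hh r1 (-v1) (-v2) (-σ) (by rwa [norm_neg])
    (by rwa [inner_neg_sub_neg_neg])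
  rw [inner_neg_sub_neg_neg] at incoming
  set k := ⟪v2 - v1, σ⟫
  have hk_post : ⟪-(v2 - k • σ) - -(v1 + k • σ), σ⟫ = k := by
    rw [neg_sub_neg, show v1 + k • σ - (v2 - k • σ) = -(v2 - v1) + (2 * k) • σ by module,
      inner_add_left, inner_neg_left, real_inner_smul_left, real_inner_self_eq_norm_sq, hσ]
    ring
  have outgoing := hh r1 (-(v1 + k • σ)) (-(v2 - k • σ)) σ hσ (by rwa [hk_post])
  rw [show -v1 + k • -σ = -(v1 + k • σ) by module, show -v2 - k • -σ = -(v2 - k • σ) by module,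
    show r1 - a • -σ = r1 + a • σ by module] at incoming
  rw [hk_post, show -(v1 + k • σ) + k • σ = -v1 by module,
    show -(v2 - k • σ) - k • σ = -v2 by module] at outgoing
  linear_combination outgoing - incoming

end Collision

theorem enskogCollision_comp_velocityTimeFlip {a : ℝ} (n : ℝ) {f : E × E × ℝ → ℝ}
    (hf : ∀ t, ProductCollisionInvariant a fun r v => f (r, v, t)) (r1 v1 : E) (t : ℝ) :
    enskogCollision a n (fun p => f (p.1, -p.2.1, -p.2.2)) r1 v1 t
      = -enskogCollision a n f r1 (-v1) (-t) := by
  unfold enskogCollision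
  conv_rhs => rw [← mul_neg, ← integral_neg_eq_self, ← integral_neg]
  congr 1
  refine integral_congr_ae (Filter.Eventually.of_forall fun v2 => ?_)
  beta_reduce
  rw [← neg_collisionHemisphere, setIntegral_neg_hausdorffMeasure, ← integral_neg]
  refine setIntegral_congr_fun (measurableSet_collisionHemisphere _) fun σ ⟨hσ, hk⟩ => ?_
  rw [inner_neg_sub_neg_neg, (hf (-t)).gainLoss_reversal r1 v1 v2 hσ hk, mul_neg,
    show r1 + a • -σ = r1 - a • σ by module, show r1 - a • -σ = r1 + a • σ by module,
    show -v1 + ⟪v2 - v1, σ⟫ • -σ = -(v1 + ⟪v2 - v1, σ⟫ • σ) by module,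
    show -v2 - ⟪v2 - v1, σ⟫ • -σ = -(v2 - ⟪v2 - v1, σ⟫ • σ) by module]

theorem BE_reversible_of_factorization_general (a n : ℝ)
    (f : E × E × ℝ → ℝ) (hf : SolvesBE a n f)
    (hfact : ∀ (r1 v1 v2 : E) (t : ℝ) (σ : E), ‖σ‖ = 1 → 0 ≤ ⟪v2 - v1, σ⟫ →
      f (r1, v1, t) * f (r1 - a • σ, v2, t)
        = f (r1, v1 + ⟪v2 - v1, σ⟫ • σ, t) * f (r1 - a • σ, v2 - ⟪v2 - v1, σ⟫ • σ, t)) :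
    SolvesBE a n (fun p => f (p.1, -p.2.1, -p.2.2)) := by
  intro r1 v1 t
  have hcoll := enskogCollision_comp_velocityTimeFlip n
    (fun t r1 v1 v2 σ => hfact r1 v1 v2 t σ) r1 v1 t
  rw [fderiv_comp_velocityTimeFlip, fderiv_comp_velocityTimeFlip, hcoll]
  have hflip : ∀ w : E × E × ℝ, (w.1, -w.2.1, -w.2.2) = -(-w.1, w.2.1, w.2.2) := by simp
  rw [hflip (0, 0, 1), hflip (v1, 0, 0), map_neg, map_neg]
  simp only [neg_zero, neg_neg]
  linear_combination -hf r1 (-v1) (-t)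

theorem BE_reversible_of_factorization (a n : ℝ) (ha : 0 < a) (hn : 0 < n)
    (f : E × E × ℝ → ℝ) (hf : SolvesBE a n f)
    (hfact : ∀ (r1 v1 v2 : E) (t : ℝ) (σ : E), ‖σ‖ = 1 → 0 ≤ ⟪v2 - v1, σ⟫ →
      f (r1, v1, t) * f (r1 - a • σ, v2, t)
        = f (r1, v1 + ⟪v2 - v1, σ⟫ • σ, t) * f (r1 - a • σ, v2 - ⟪v2 - v1, σ⟫ • σ, t)) :
    SolvesBE a n (fun p => f (p.1, -p.2.1, -p.2.2)) :=
  BE_reversible_of_factorization_general a n f hf hfact
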